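/- arXiv:2407.15860 — 7 statements merged into one kernel-verified Lean document; each statement's English description precedes it below -/
import Mathlib

section
/- The simplex graph of the complement of the path graph P_n is isomorphic to the Fibonacci cube of order n; in particular it has F_{n+2} vertices. -/
open SimpleGraph

/-- The simplex graph of `G`. -/
def simplexGraph {V : Type*} (G : SimpleGraph V) :
    SimpleGraph {s : Set V // G.IsClique s} where
  Adj s t := ∃ v, (v ∉ s.1 ∧ t.1 = insert v s.1) ∨ (v ∉ t.1 ∧ s.1 = insert v t.1)
  symm := by
    constructor
    rintro s t ⟨v, h | h⟩
    · exact ⟨v, Or.inr h⟩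
    · exact ⟨v, Or.inl h⟩
  loopless := by
    constructor
    rintro s ⟨v, ⟨hv, he⟩ | ⟨hv, he⟩⟩ <;> exact hv (he ▸ Set.mem_insert v _)

/-- The hypercube graph `Qₙ`. -/
def hypercubeGraph (n : ℕ) : SimpleGraph (Fin n → Bool) where
  Adj x y := (Finset.univ.filter fun i => x i ≠ y i).card = 1
  symm := by
    constructor
    intro x y h
    simpa [ne_comm] using h
  loopless := by constructor; intro x h; simp at h

/-- The Fibonacci cube of order `n`: the subgraph of `Qₙ` induced by the binary
strings with no two consecutive 1s. -/
def fibonacciCube (n : ℕ) : SimpleGraph {x : Fin n → Bool //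
    ∀ i : Fin n, ∀ h : (i : ℕ) + 1 < n, ¬(x i = true ∧ x ⟨(i : ℕ) + 1, h⟩ = true)} :=
  (hypercubeGraph n).induce _

/-!
A clique of `G` on `Fin n` is determined by its indicator vector, and two cliques differ in
exactly one vertex iff their indicator vectors differ in exactly one coordinate, so `κ(G)` is the
subgraph of `Qₙ` induced by the indicator vectors of cliques. A set is a clique of the complement
of `Pₙ` iff it contains no two consecutive vertices, i.e. iff its indicator vector has no two
consecutive 1s. Such strings of length `n + 2` are `0` followed by one of length `n + 1`, or `10`
followed by one of length `n`, which gives the Fibonacci recursion for their number.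
-/

open scoped symmDiff

theorem Set.symmDiff_eq_singleton_iff {α : Type*} {s t : Set α} {v : α} :
    s ∆ t = {v} ↔ (v ∉ s ∧ t = insert v s) ∨ (v ∉ t ∧ s = insert v t) := by
  simp only [Set.ext_iff, Set.mem_symmDiff, Set.mem_singleton_iff, Set.mem_insert_iff]
  constructor
  · intro h
    by_cases hv : v ∈ s
    · exact Or.inr ⟨by grind, fun u => by grind⟩
    · exact Or.inl ⟨hv, fun u => by grind⟩
  · grind

theorem simplexGraph_adj_iff {V : Type*} {G : SimpleGraph V} {s t : {s : Set V // G.IsClique s}} :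
    (simplexGraph G).Adj s t ↔ ∃ v, s.1 ∆ t.1 = {v} := by
  simp only [Set.symmDiff_eq_singleton_iff]
  rfl

theorem hypercubeGraph_adj_iff {n : ℕ} {x y : Fin n → Bool} :
    (hypercubeGraph n).Adj x y ↔ ∃ v, {i | x i ≠ y i} = {v} := by
  simp only [hypercubeGraph, Finset.card_eq_one, ← Finset.coe_inj, Finset.coe_filter,
    Finset.mem_univ, true_and, Finset.coe_singleton]

noncomputable def Set.equivBoolFun (α : Type*) : Set α ≃ (α → Bool) where
  toFun := Set.boolIndicator
  invFun x := {a | x a = true}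
  left_inv s := Set.ext fun a => (s.mem_iff_boolIndicator a).symm
  right_inv x := funext fun a => Bool.eq_iff_iff.2 ({a | x a = true}.mem_iff_boolIndicator a).symm

theorem Set.setOf_boolIndicator_ne {α : Type*} (s t : Set α) :
    {a | s.boolIndicator a ≠ t.boolIndicator a} = s ∆ t := by
  ext a
  rw [Set.mem_symmDiff, s.mem_iff_boolIndicator, t.mem_iff_boolIndicator]
  change s.boolIndicator a ≠ t.boolIndicator a ↔ _
  cases s.boolIndicator a <;> cases t.boolIndicator a <;> decide

noncomputable def simplexGraphIsoInduceHypercube {n : ℕ} (G : SimpleGraph (Fin n)) :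
    simplexGraph G ≃g (hypercubeGraph n).induce {x | G.IsClique {i | x i = true}} where
  toEquiv := (Set.equivBoolFun (Fin n)).subtypeEquiv fun s =>
    Iff.of_eq (congrArg G.IsClique ((Set.equivBoolFun (Fin n)).symm_apply_apply s).symm)
  map_rel_iff' {s t} := by
    rw [induce_adj, hypercubeGraph_adj_iff, simplexGraph_adj_iff]
    exact exists_congr fun v => by rw [← Set.setOf_boolIndicator_ne]; rfl

def NoConsecutiveOnes {n : ℕ} (x : Fin n → Bool) : Prop :=
  ∀ i : Fin n, ∀ h : (i : ℕ) + 1 < n, ¬(x i = true ∧ x ⟨(i : ℕ) + 1, h⟩ = true)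

theorem isClique_compl_pathGraph_iff {n : ℕ} {s : Set (Fin n)} :
    (pathGraph n)ᶜ.IsClique s ↔
      ∀ i : Fin n, ∀ h : (i : ℕ) + 1 < n, ¬(i ∈ s ∧ (⟨i + 1, h⟩ : Fin n) ∈ s) := by
  simp only [isClique_compl, isIndepSet_iff, Set.Pairwise, pathGraph_adj]
  constructor
  · rintro h i hi ⟨his, hsucc⟩
    exact h his hsucc (by simp [Fin.ext_iff]) (Or.inl rfl)
  · rintro h ⟨i, hi⟩ his ⟨j, hj⟩ hjs - (rfl | rfl)
    · exact h _ hj ⟨his, hjs⟩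
    · exact h _ hi ⟨hjs, his⟩

theorem setOf_isClique_compl_pathGraph (n : ℕ) :
    {x : Fin n → Bool | (pathGraph n)ᶜ.IsClique {i | x i = true}} =
      {x | NoConsecutiveOnes x} :=
  Set.ext fun _ => isClique_compl_pathGraph_iff

theorem noConsecutiveOnes_of_le_one {n : ℕ} (hn : n ≤ 1) (x : Fin n → Bool) :
    NoConsecutiveOnes x :=
  fun _ h => absurd h (by omega)

theorem noConsecutiveOnes_iff {n : ℕ} (x : Fin (n + 1) → Bool) :
    NoConsecutiveOnes x ↔ ∀ i : Fin n, ¬(x i.castSucc = true ∧ x i.succ = true) :=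
  ⟨fun h i => h i.castSucc (by simp), fun h i hi => h ⟨i, by omega⟩⟩

theorem noConsecutiveOnes_cons {n : ℕ} (b : Bool) (y : Fin (n + 1) → Bool) :
    NoConsecutiveOnes (Fin.cons b y : Fin (n + 2) → Bool) ↔
      ¬(b = true ∧ y 0 = true) ∧ NoConsecutiveOnes y := by
  simp only [noConsecutiveOnes_iff, Fin.forall_fin_succ (n := n), ← Fin.succ_castSucc,
    Fin.cons_succ, Fin.castSucc_zero, Fin.cons_zero]

theorem noConsecutiveOnes_cons_false {n : ℕ} (y : Fin n → Bool) :
    NoConsecutiveOnes (Fin.cons false y : Fin (n + 1) → Bool) ↔ NoConsecutiveOnes y := by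
  cases n with
  | zero => simp [noConsecutiveOnes_of_le_one]
  | succ n => simp [noConsecutiveOnes_cons]

theorem noConsecutiveOnes_cons_true {n : ℕ} (y : Fin (n + 1) → Bool) :
    NoConsecutiveOnes (Fin.cons true y : Fin (n + 2) → Bool) ↔
      NoConsecutiveOnes y ∧ y 0 = false := by
  simp [noConsecutiveOnes_cons, and_comm]

theorem Nat.card_subtype_fin_succ_eq_sum {α : Type*} [Fintype α] {n : ℕ}
    (p : (Fin (n + 1) → α) → Prop) :
    Nat.card {x // p x} = ∑ a, Nat.card {y : Fin n → α // p (Fin.cons a y)} := by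
  rw [← Nat.card_sigma]
  exact Nat.card_congr <|
    ((Fin.consEquiv fun _ => α).symm.subtypeEquiv fun x => by simp).trans
      (Equiv.subtypeProdEquivSigmaSubtype fun a y => p (Fin.cons a y))

theorem card_noConsecutiveOnes :
    ∀ n, Nat.card {x : Fin n → Bool // NoConsecutiveOnes x} = Nat.fib (n + 2)
  | 0 | 1 => by
    rw [Nat.card_congr (Equiv.subtypeUnivEquiv (noConsecutiveOnes_of_le_one (by simp)))]
    simp [Nat.fib_add_two]
  | n + 2 => by
    have h_head_false :
        Nat.card {y : Fin (n + 1) → Bool // NoConsecutiveOnes y ∧ y 0 = false} =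
          Nat.card {z : Fin n → Bool // NoConsecutiveOnes z} := by
      rw [Nat.card_subtype_fin_succ_eq_sum]
      simp [noConsecutiveOnes_cons_false]
    rw [Nat.card_subtype_fin_succ_eq_sum, Fintype.sum_bool]
    simp only [noConsecutiveOnes_cons_true, noConsecutiveOnes_cons_false, h_head_false,
      card_noConsecutiveOnes n, card_noConsecutiveOnes (n + 1), Nat.fib_add_two]

theorem simplexGraph_compl_pathGraph_iso_fibonacciCube (n : ℕ) :
    Nonempty (simplexGraph (pathGraph n)ᶜ ≃g fibonacciCube n) ∧
      Nat.card {s : Set (Fin n) // (pathGraph n)ᶜ.IsClique s} = Nat.fib (n + 2) := by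
  have e : simplexGraph (pathGraph n)ᶜ ≃g fibonacciCube n :=
    (simplexGraphIsoInduceHypercube _).trans
      (Iso.refl.induce (setOf_isClique_compl_pathGraph n ▸ Set.bijOn_id _))
  exact ⟨⟨e⟩, (Nat.card_congr e.toEquiv).trans (card_noConsecutiveOnes n)⟩
end

section
/- If sequences (v_n) and (e_n) of positive reals satisfy v_n = v_{n-1} + e_{n-1} + 1 and e_n = 2e_{n-1} + v_{n-1} for all n ≥ 1 with v_0, e_0 ≥ 1, then e_n/v_n tends to the golden ratio φ = (1+√5)/2 as n → ∞. -/
open Filter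

noncomputable def phi : ℝ := (1 + Real.sqrt 5) / 2

/-! With `u = v - 1` and `f = e + 1` the recurrence becomes linear with matrix `[[1, 1], [1, 2]]`,
whose eigenvalues are `φ²` and `ψ²`. The functional `f - φ u = e - φ v + φ²` is a left
eigenvector for `ψ²`, so it decays geometrically: `e - φ v` converges while `v` grows at least
linearly, hence `e / v - φ = (e - φ v) / v → 0`. -/

open Real goldenRatio Topology

theorem Filter.Tendsto.div_of_tendsto_sub_mul {α : Type*} {l : Filter α} {f g : α → ℝ}
    {a c : ℝ}
    (hg : Tendsto g l atTop) (h : Tendsto (fun x => f x - a * g x) l (𝓝 c)) :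
    Tendsto (fun x => f x / g x) l (𝓝 a) := by
  have hlim : Tendsto (fun x => a + (f x - a * g x) / g x) l (𝓝 a) := by
    simpa using (h.div_atTop hg).const_add a
  refine hlim.congr' ?_
  filter_upwards [hg.eventually_ne_atTop 0] with x hx
  field_simp
  ring

theorem tendsto_of_succ_eq_mul {x : ℕ → ℝ} {r : ℝ} (hr : |r| < 1)
    (hx : ∀ n, x (n + 1) = r * x n) :
    Tendsto x atTop (𝓝 0) := by
  have hclosed : ∀ n, x n = r ^ n * x 0 := by
    intro n
    induction n with
    | zero => simp
    | succ n ih => rw [hx, ih, pow_succ']; ring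
  rw [funext hclosed]
  simpa using (tendsto_pow_atTop_nhds_zero_of_abs_lt_one hr).mul_const (x 0)

theorem tendsto_atTop_of_add_one_le {u : ℕ → ℝ} (hu : ∀ n, u n + 1 ≤ u (n + 1)) :
    Tendsto u atTop atTop := by
  have hlin : ∀ n : ℕ, u 0 + n ≤ u n := by
    intro n
    induction n with
    | zero => simp
    | succ n ih => push_cast; linarith [hu n]
  exact tendsto_atTop_mono hlin (tendsto_atTop_add_const_left _ _ tendsto_natCast_atTop_atTop)

theorem abs_goldenConj_sq_lt_one : |ψ ^ 2| < 1 := by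
  rw [goldenConj_sq, abs_lt]
  constructor <;> linarith [neg_one_lt_goldenConj, goldenConj_neg]

section SimplexGraphRecurrence

variable {v e : ℕ → ℝ}

theorem sub_goldenRatio_mul_add_sq_succ
    (hrec : ∀ n, v (n + 1) = v n + e n + 1 ∧ e (n + 1) = 2 * e n + v n) (n : ℕ) :
    e (n + 1) - φ * v (n + 1) + φ ^ 2 = ψ ^ 2 * (e n - φ * v n + φ ^ 2) := by
  rw [(hrec n).1, (hrec n).2]
  linear_combination (φ - v n) * goldenRatio_sq -
    (e n - φ * v n + φ ^ 2) * (goldenConj_sq + goldenRatio_add_goldenConj)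

theorem tendsto_sub_goldenRatio_mul
    (hrec : ∀ n, v (n + 1) = v n + e n + 1 ∧ e (n + 1) = 2 * e n + v n) :
    Tendsto (fun n => e n - φ * v n) atTop (𝓝 (-φ ^ 2)) := by
  have hgap := tendsto_of_succ_eq_mul (x := fun n => e n - φ * v n + φ ^ 2)
    abs_goldenConj_sq_lt_one (sub_goldenRatio_mul_add_sq_succ hrec)
  convert hgap.sub_const (φ ^ 2) using 2 <;> ring

theorem tendsto_atTop_of_nonneg
    (hrec : ∀ n, v (n + 1) = v n + e n + 1 ∧ e (n + 1) = 2 * e n + v n)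
    (he : ∀ n, 0 ≤ e n) :
    Tendsto v atTop atTop :=
  tendsto_atTop_of_add_one_le fun n => by linarith [(hrec n).1, he n]

end SimplexGraphRecurrence

theorem ratio_tendsto_goldenRatio_general (v e : ℕ → ℝ)
    (hpos : ∀ n, 0 < v n ∧ 0 < e n)
    (hrec : ∀ n, v (n + 1) = v n + e n + 1 ∧ e (n + 1) = 2 * e n + v n) :
    Tendsto (fun n => e n / v n) atTop (nhds phi) :=
  (tendsto_atTop_of_nonneg hrec fun n => (hpos n).2.le).div_of_tendsto_sub_mul
    (tendsto_sub_goldenRatio_mul hrec)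

theorem ratio_tendsto_goldenRatio (v e : ℕ → ℝ)
    (hpos : ∀ n, 0 < v n ∧ 0 < e n)
    (hv0 : 1 ≤ v 0) (he0 : 1 ≤ e 0)
    (hrec : ∀ n, v (n + 1) = v n + e n + 1 ∧ e (n + 1) = 2 * e n + v n) :
    Tendsto (fun n => e n / v n) atTop (nhds phi) :=
  ratio_tendsto_goldenRatio_general v e hpos hrec
end

section
/- The energy of a graph (the sum of the absolute values of the eigenvalues of its adjacency matrix) is never an odd integer. -/
/-!
The adjacency matrix has integer entries, so its eigenvalues are algebraic integers, and its trace
is zero, so the eigenvalues sum to zero. Hence the energy `∑ |λᵢ|` equals twice the sum of the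
positive eigenvalues, which is an algebraic integer. If the energy were an odd integer `k`, the
rational number `k / 2` would be an algebraic integer, hence an integer.
-/

open Polynomial Matrix

theorem SimpleGraph.adjMatrix_map {V α β : Type*} [DecidableEq V] (G : SimpleGraph V)
    [DecidableRel G.Adj] [Zero α] [One α] [Zero β] [One β] {f : α → β} (h₀ : f 0 = 0)
    (h₁ : f 1 = 1) : (G.adjMatrix α).map f = G.adjMatrix β := by
  ext i j
  by_cases h : G.Adj i j <;> simp [h, h₀, h₁]

theorem Matrix.IsHermitian.isIntegral_eigenvalues {n : Type*} [Fintype n] [DecidableEq n]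
    {A : Matrix n n ℝ} (hA : A.IsHermitian) {B : Matrix n n ℤ} (hB : B.map (Int.cast) = A)
    (i : n) : IsIntegral ℤ (hA.eigenvalues i) := by
  refine ⟨B.charpoly, B.charpoly_monic, ?_⟩
  have hmap : B.charpoly.map (algebraMap ℤ ℝ) = A.charpoly := by
    rw [← charpoly_map, ← hB]
    rfl
  rw [eval₂_eq_eval_map, hmap, hA.charpoly_eq, eval_prod]
  exact Finset.prod_eq_zero (Finset.mem_univ i) (by simp)

theorem Finset.sum_abs_eq_two_nsmul_sum_posPart {ι α : Type*} [AddCommGroup α] [Lattice α]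
    [IsOrderedAddMonoid α] (s : Finset ι) (x : ι → α) (hx : ∑ i ∈ s, x i = 0) :
    ∑ i ∈ s, |x i| = 2 • ∑ i ∈ s, (x i)⁺ := by
  have hpos_neg : ∑ i ∈ s, (x i)⁺ = ∑ i ∈ s, (x i)⁻ := by
    rw [← sub_eq_zero, ← sum_sub_distrib, ← hx]
    simp only [posPart_sub_negPart]
  simp only [← posPart_add_negPart, sum_add_distrib, ← hpos_neg, two_nsmul]

theorem IsIntegral.posPart {R α : Type*} [CommRing R] [Ring α] [LinearOrder α]
    [IsOrderedAddMonoid α] [Algebra R α] {x : α} (hx : IsIntegral R x) : IsIntegral R x⁺ := by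
  rcases le_total x 0 with h | h
  · rw [posPart_eq_zero.mpr h]
    exact isIntegral_zero
  · rwa [posPart_eq_self.mpr h]

theorem Odd.not_isIntegral_intCast_div_two {α : Type*} [Field α] [CharZero α] {k : ℤ}
    (hk : Odd k) : ¬IsIntegral ℤ ((k : α) / 2) := by
  intro h
  obtain ⟨m, hm⟩ := h.exists_int_iff_exists_rat.mp ⟨(k : ℚ) / 2, by push_cast; rfl⟩
  have hkm : k = 2 * m := by
    have : (k : α) = 2 * m := by rw [← hm]; ring
    exact_mod_cast this
  exact Int.not_even_iff_odd.mpr hk ⟨m, by omega⟩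

theorem Finset.sum_abs_ne_intCast_of_odd {ι : Type*} (s : Finset ι) (x : ι → ℝ)
    (hint : ∀ i ∈ s, IsIntegral ℤ (x i)) (hsum : ∑ i ∈ s, x i = 0) {k : ℤ} (hk : Odd k) :
    ∑ i ∈ s, |x i| ≠ k := by
  intro h
  apply hk.not_isIntegral_intCast_div_two (α := ℝ)
  rw [← h, sum_abs_eq_two_nsmul_sum_posPart s x hsum, two_nsmul, add_self_div_two]
  exact IsIntegral.sum _ fun i hi ↦ (hint i hi).posPart

theorem energy_ne_odd_integer {V : Type*} [Fintype V] [DecidableEq V]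
    (G : SimpleGraph V) [DecidableRel G.Adj]
    (hA : (G.adjMatrix ℝ).IsHermitian) (k : ℤ) (hk : Odd k) :
    ∑ i, |hA.eigenvalues i| ≠ (k : ℝ) := by
  have hint : (G.adjMatrix ℤ).map (Int.cast) = G.adjMatrix ℝ :=
    G.adjMatrix_map Int.cast_zero Int.cast_one
  have htrace : ∑ i, hA.eigenvalues i = 0 := by
    simpa [hA.trace_eq_sum_eigenvalues] using G.trace_adjMatrix (α := ℝ)
  exact Finset.sum_abs_ne_intCast_of_odd _ _
    (fun i _ ↦ hA.isIntegral_eigenvalues hint i) htrace hk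
end

section
/- The energy of a graph cannot equal the golden ratio φ = (1+√5)/2. -/
open SimpleGraph

private lemma sum_sq_le_half_sq_sum_abs {ι : Type*} [Fintype ι] [DecidableEq ι] (x : ι → ℝ)
    (h0 : ∑ i, x i = 0) : ∑ i, (x i) ^ 2 ≤ (∑ i, |x i|) ^ 2 / 2 := by
  set E := ∑ i, |x i| with hE
  have key : ∀ i, 2 * |x i| ≤ E := by
    intro i
    have h1 : x i + ∑ j ∈ Finset.univ.erase i, x j = 0 := by
      rw [Finset.add_sum_erase _ x (Finset.mem_univ i)]; exact h0
    have h2 : |x i| + ∑ j ∈ Finset.univ.erase i, |x j| = E := by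
      rw [Finset.add_sum_erase _ (fun j => |x j|) (Finset.mem_univ i)]
    have h3 : |x i| = |∑ j ∈ Finset.univ.erase i, x j| := by
      rw [show (∑ j ∈ Finset.univ.erase i, x j) = -x i by linarith, abs_neg]
    have h4 : |∑ j ∈ Finset.univ.erase i, x j| ≤ ∑ j ∈ Finset.univ.erase i, |x j| :=
      Finset.abs_sum_le_sum_abs _ _
    linarith
  calc ∑ i, x i ^ 2 = ∑ i, |x i| * |x i| := by
        refine Finset.sum_congr rfl fun i _ => ?_; rw [sq, ← abs_mul_abs_self]
    _ ≤ ∑ i, (E / 2) * |x i| := by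
        refine Finset.sum_le_sum fun i _ => ?_
        exact mul_le_mul_of_nonneg_right (by linarith [key i]) (abs_nonneg _)
    _ = E ^ 2 / 2 := by rw [← Finset.mul_sum, ← hE]; ring

theorem energy_ne_goldenRatio {V : Type*} [Fintype V] [DecidableEq V]
    (G : SimpleGraph V) [DecidableRel G.Adj]
    (hA : (G.adjMatrix ℝ).IsHermitian) :
    ∑ i, |hA.eigenvalues i| ≠ phi := by
  intro hcon
  set A := G.adjMatrix ℝ with hAdef
  set U := (hA.eigenvectorUnitary : Matrix V V ℝ) with hU
  set D := Matrix.diagonal hA.eigenvalues with hD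
  have hst : star U * U = 1 := Unitary.coe_star_mul_self hA.eigenvectorUnitary
  have h : A = U * D * star U := by
    have h := hA.spectral_theorem
    have hd : (RCLike.ofReal ∘ hA.eigenvalues : V → ℝ) = hA.eigenvalues := by ext i; simp
    rw [hd] at h; exact h
  -- sum of eigenvalues is zero
  have hsum0 : ∑ i, hA.eigenvalues i = 0 := by
    have key : Matrix.trace (U * D * star U) = ∑ i, hA.eigenvalues i := by
      rw [Matrix.trace_mul_comm, ← mul_assoc, hst, one_mul, hD, Matrix.trace_diagonal]
    calc ∑ i, hA.eigenvalues i = Matrix.trace (U * D * star U) := key.symm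
      _ = Matrix.trace A := by rw [← h]
      _ = 0 := trace_adjMatrix ℝ G
  -- sum of squares of eigenvalues equals trace of A²
  have hsumsq : Matrix.trace (A * A) = ∑ i, hA.eigenvalues i ^ 2 := by
    have h2 : A * A = U * (D * (D * star U)) := by
      rw [h]; simp only [mul_assoc]; rw [← mul_assoc (star U) U, hst, one_mul]
    rw [h2, Matrix.trace_mul_comm]
    simp only [mul_assoc]
    rw [hst, mul_one, hD, Matrix.diagonal_mul_diagonal, Matrix.trace_diagonal]
    simp [sq]
  -- trace of A² is the sum of degrees, a natural number which is twice the edge count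
  have htr : Matrix.trace (A * A) = ((∑ i, G.degree i : ℕ) : ℝ) := by
    rw [Matrix.trace]
    push_cast
    refine Finset.sum_congr rfl fun i _ => ?_
    rw [Matrix.diag_apply, hAdef, SimpleGraph.adjMatrix_mul_self_apply_self]
  have hsqrt5 : Real.sqrt 5 < 3 := by
    nlinarith [Real.sq_sqrt (by norm_num : (5:ℝ) ≥ 0), Real.sqrt_nonneg 5]
  have hsqrt5' : (0:ℝ) ≤ Real.sqrt 5 := Real.sqrt_nonneg 5
  -- main inequality
  have hineq := sum_sq_le_half_sq_sum_abs hA.eigenvalues hsum0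
  rw [hcon] at hineq
  have hphisq : phi ^ 2 / 2 < 2 := by
    rw [phi]
    nlinarith [Real.sq_sqrt (by norm_num : (5:ℝ) ≥ 0)]
  have hlt2 : ((∑ i, G.degree i : ℕ) : ℝ) < 2 := by
    rw [← htr, hsumsq]; linarith
  have hnat : (∑ i, G.degree i) < 2 := by exact_mod_cast hlt2
  have heven : 2 * (G.edgeFinset.card) = ∑ i, G.degree i :=
    (G.sum_degrees_eq_twice_card_edges).symm
  have hzero : ∑ i, G.degree i = 0 := by omega
  have hsqzero : ∑ i, hA.eigenvalues i ^ 2 = 0 := by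
    rw [← hsumsq, htr, hzero]; norm_num
  have hall : ∀ i ∈ Finset.univ, hA.eigenvalues i ^ 2 = 0 :=
    (Finset.sum_eq_zero_iff_of_nonneg (fun i _ => sq_nonneg _)).mp hsqzero
  have hE0 : ∑ i, |hA.eigenvalues i| = 0 := by
    refine Finset.sum_eq_zero fun i _ => ?_
    have := hall i (Finset.mem_univ i)
    rw [abs_eq_zero]
    exact pow_eq_zero_iff (by norm_num) |>.mp this
  rw [hcon, phi] at hE0
  linarith
end

section
/- The number φ² = (3+√5)/2 = φ + 1 is not a root of the chromatic polynomial of any graph. -/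
/-!
Every finite graph `G` has an integer polynomial `P` counting its proper colourings, and
`(-1) ^ (|V| - c(G)) P(x) > 0` for `0 < x < 1`, where `c(G)` is the number of components.
This follows by deletion–contraction `P(G) = P(G - uv) - P(G / uv)`: contracting an edge keeps
`c` and lowers `|V|` by one, deleting a non-bridge keeps `c`, and for a bridge `uv` recolouring
the component of `v` gives `P(G - uv) = X · P(G / uv)`, hence `P(G) = (X - 1) P(G / uv)`.

Since `φ²` is an irrational root of `X² - 3X + 1`, an integer polynomial vanishing at `φ²` also
vanishes at the conjugate `ψ² = (3 - √5) / 2 ∈ (0, 1)`, which is impossible for `P`.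
-/

open SimpleGraph Polynomial

/-- `x` is a chromatic root if it is a root of the chromatic polynomial of some
finite graph, where the chromatic polynomial is characterised by counting proper
colorings at every natural number. -/
def IsChromaticRoot (x : ℝ) : Prop :=
  ∃ (V : Type) (_ : Fintype V) (G : SimpleGraph V) (p : Polynomial ℝ),
    (∀ k : ℕ, p.eval (k : ℝ) = Nat.card (G.Coloring (Fin k))) ∧ p.eval x = 0

theorem Polynomial.eq_of_eval_natCast_eq {R : Type*} [CommRing R] [IsDomain R] [CharZero R]
    {p q : R[X]} (h : ∀ k : ℕ, p.eval (k : R) = q.eval (k : R)) : p = q :=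
  eq_of_infinite_eval_eq p q <| (Set.infinite_range_of_injective Nat.cast_injective).mono <| by
    rintro _ ⟨k, rfl⟩; exact h k

theorem Polynomial.dvd_of_aeval_eq_zero_of_irrational {f p : ℤ[X]} (hf : f.Monic)
    (hdeg : f.natDegree = 2) {x : ℝ} (hx : Irrational x) (hfx : aeval x f = 0)
    (hpx : aeval x p = 0) : f ∣ p := by
  rw [← modByMonic_eq_zero_iff_dvd hf]
  have hrx : aeval x (p %ₘ f) = 0 := by
    simpa [hfx, hpx] using congrArg (aeval x) (modByMonic_add_div p f)
  set r := p %ₘ f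
  have hr : r = C (r.coeff 1) * X + C (r.coeff 0) := by
    have : r.degree < 1 + 1 := by
      simpa [degree_eq_natDegree hf.ne_zero, hdeg, one_add_one_eq_two]
        using degree_modByMonic_lt p hf
    exact eq_X_add_C_of_degree_le_one (Order.le_of_lt_succ this)
  rw [hr] at hrx ⊢
  have h1 : r.coeff 1 = 0 := by
    by_contra h
    exact ((hx.intCast_mul h).add_intCast _).ne_zero (by simpa using hrx)
  have h0 : r.coeff 0 = 0 := by simpa [h1] using hrx
  rw [h1, h0, map_zero, zero_mul, zero_add]

theorem Nat.card_subtype_ne_add_one {α : Type*} [Finite α] (a : α) :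
    Nat.card {x // x ≠ a} + 1 = Nat.card α := by
  classical
  rw [← Finite.card_option, Nat.card_congr (Equiv.optionSubtypeNe a)]

namespace SimpleGraph

variable {V W : Type*} {G : SimpleGraph V} {u v : V}

theorem Reachable.lift {H : SimpleGraph W} (f : V → W)
    (h : ∀ a b, G.Adj a b → H.Reachable (f a) (f b)) {a b : V} (hab : G.Reachable a b) :
    H.Reachable (f a) (f b) := by
  rw [reachable_eq_reflTransGen] at h hab ⊢
  exact Relation.ReflTransGen.lift' f h _ _ hab

theorem natCard_connectedComponent_eq_of_surjective {H : SimpleGraph W} {f : V → W}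
    (hf : f.Surjective) (h : ∀ a b, H.Reachable (f a) (f b) ↔ G.Reachable a b) :
    Nat.card H.ConnectedComponent = Nat.card G.ConnectedComponent := by
  refine (Nat.card_eq_of_bijective (ConnectedComponent.lift
    (fun a => H.connectedComponentMk (f a)) fun a b p _ => ConnectedComponent.sound
      ((h a b).2 p.reachable)) ⟨?_, ?_⟩).symm
  · rintro ⟨a⟩ ⟨b⟩ hab
    exact ConnectedComponent.sound ((h a b).1 (ConnectedComponent.exact hab))
  · rintro ⟨y⟩
    obtain ⟨a, rfl⟩ := hf y
    exact ⟨G.connectedComponentMk a, rfl⟩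

theorem natCard_connectedComponent_bot :
    Nat.card (⊥ : SimpleGraph V).ConnectedComponent = Nat.card V :=
  (Nat.card_eq_of_bijective _ ⟨fun _ _ h => reachable_bot.1 (ConnectedComponent.exact h),
    Quot.mk_surjective⟩).symm

theorem reachable_map_iff {f : V → W} (hf : ∀ a b, f a = f b → G.Reachable a b) {a b : V} :
    (G.map f).Reachable (f a) (f b) ↔ G.Reachable a b := by
  refine ⟨fun h => ?_, Reachable.lift f fun c d hcd => ?_⟩
  · suffices ∀ y, (G.map f).Reachable (f a) y → ∀ b, f b = y → G.Reachable a b from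
      this _ h b rfl
    intro y hy
    rw [reachable_iff_reflTransGen] at hy
    induction hy with
    | refl => exact fun b hb => hf _ _ hb.symm
    | tail _ hcd ih =>
      obtain ⟨-, c, d, hcd, rfl, rfl⟩ := hcd
      exact fun b hb => (ih c rfl).trans (hcd.reachable.trans (hf _ _ hb.symm))
  · by_cases hfcd : f c = f d
    · rw [hfcd]
    · exact (map_adj_apply' hcd hfcd).reachable

theorem reachable_deleteEdges_iff_of_not_isBridge (h : ¬ G.IsBridge s(u, v)) {a b : V} :
    (G.deleteEdges {s(u, v)}).Reachable a b ↔ G.Reachable a b := by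
  rw [isBridge_iff, not_not] at h
  refine ⟨Reachable.mono (deleteEdges_le _), Reachable.lift id fun c d hcd => ?_⟩
  by_cases he : s(c, d) = s(u, v)
  · rcases Sym2.eq_iff.1 he with ⟨rfl, rfl⟩ | ⟨rfl, rfl⟩
    exacts [h, h.symm]
  · exact Adj.reachable (by simp [hcd, he])

theorem natCard_connectedComponent_deleteEdges_of_not_isBridge (h : ¬ G.IsBridge s(u, v)) :
    Nat.card (G.deleteEdges {s(u, v)}).ConnectedComponent = Nat.card G.ConnectedComponent :=
  (natCard_connectedComponent_eq_of_surjective Function.surjective_id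
    fun _ _ => (reachable_deleteEdges_iff_of_not_isBridge h).symm).symm

section Contraction

open Classical in
noncomputable def contractMap (huv : u ≠ v) (w : V) : {w // w ≠ v} :=
  if hw : w = v then ⟨u, huv⟩ else ⟨w, hw⟩

/-- `v` is merged into `u`; `map` discards the resulting loop at `u`. -/
noncomputable def contractEdge (G : SimpleGraph V) (huv : u ≠ v) : SimpleGraph {w // w ≠ v} :=
  G.map (contractMap huv)

variable (huv : u ≠ v)

theorem contractMap_of_ne {w : V} (hw : w ≠ v) : contractMap huv w = ⟨w, hw⟩ := dif_neg hw

theorem contractMap_surjective : (contractMap huv).Surjective :=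
  fun w => ⟨w, contractMap_of_ne huv w.2⟩

theorem contractMap_eq_contractMap_iff {a b : V} :
    contractMap huv a = contractMap huv b ↔ a = b ∨ s(a, b) = s(u, v) := by
  unfold contractMap
  split_ifs <;> simp [Subtype.ext_iff] <;> grind

end Contraction

theorem natCard_connectedComponent_contractEdge (huv : G.Adj u v) :
    Nat.card (G.contractEdge huv.ne).ConnectedComponent = Nat.card G.ConnectedComponent := by
  refine natCard_connectedComponent_eq_of_surjective (contractMap_surjective huv.ne)
    fun a b => reachable_map_iff fun c d hcd => ?_
  rcases (contractMap_eq_contractMap_iff huv.ne).1 hcd with rfl | he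
  · rfl
  · rcases Sym2.eq_iff.1 he with ⟨rfl, rfl⟩ | ⟨rfl, rfl⟩
    exacts [huv.reachable, huv.reachable.symm]

section Colorings

variable {κ : Type*}

def deleteEdgeColoringEquiv (huv : G.Adj u v) :
    {g : (G.deleteEdges {s(u, v)}).Coloring κ // g u ≠ g v} ≃ G.Coloring κ where
  toFun g := Coloring.mk g fun {a b} hab => by
    by_cases he : s(a, b) = s(u, v)
    · rcases Sym2.eq_iff.1 he with ⟨rfl, rfl⟩ | ⟨rfl, rfl⟩
      exacts [g.2, g.2.symm]
    · exact g.1.valid (by simp [hab, he])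
  invFun c := ⟨c.comp (Hom.ofLE (deleteEdges_le _)), c.valid huv⟩
  left_inv _ := rfl
  right_inv _ := rfl

theorem Coloring.apply_contractMap {huv : u ≠ v} {H : SimpleGraph V} (g : H.Coloring κ)
    (hg : g u = g v) (w : V) : g (contractMap huv w) = g w := by
  by_cases hw : w = v
  · subst hw; simp [contractMap, hg]
  · rw [contractMap_of_ne huv hw]

noncomputable def contractEdgeColoringEquiv (huv : u ≠ v) :
    {g : (G.deleteEdges {s(u, v)}).Coloring κ // g u = g v} ≃
      (G.contractEdge huv).Coloring κ where
  toFun g := Coloring.mk (fun w => g.1 w) fun {a b} ⟨hab, a', b', hadj, ha, hb⟩ => by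
    subst ha hb
    rw [g.1.apply_contractMap g.2, g.1.apply_contractMap g.2]
    refine g.1.valid ?_
    rw [Ne, contractMap_eq_contractMap_iff, not_or] at hab
    simp [hadj, hab.2]
  invFun c := ⟨Coloring.mk (fun w => c (contractMap huv w)) fun {a b} hab => by
      rw [deleteEdges_adj, Set.mem_singleton_iff] at hab
      refine c.valid ⟨?_, a, b, hab.1, rfl, rfl⟩
      rw [Ne, contractMap_eq_contractMap_iff, not_or]
      exact ⟨hab.1.ne, hab.2⟩,
    congrArg c ((contractMap_eq_contractMap_iff huv).2 (Or.inr rfl))⟩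
  left_inv g := by ext w; exact g.1.apply_contractMap g.2 w
  right_inv c := by ext w; exact congrArg c (contractMap_of_ne huv w.2)

theorem natCard_coloring_deleteEdges [Finite V] [Finite κ] (huv : G.Adj u v) :
    Nat.card ((G.deleteEdges {s(u, v)}).Coloring κ) =
      Nat.card (G.Coloring κ) + Nat.card ((G.contractEdge huv.ne).Coloring κ) := by
  classical
  rw [← Nat.card_congr (deleteEdgeColoringEquiv huv),
    ← Nat.card_congr (contractEdgeColoringEquiv huv.ne), add_comm, ← Nat.card_sum]
  exact Nat.card_congr (Equiv.sumCompl fun g : (G.deleteEdges _).Coloring κ => g u = g v).symm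

open Classical in
noncomputable def Coloring.recolorComponent {H : SimpleGraph V} (g : H.Coloring κ) (v : V)
    (σ : Equiv.Perm κ) : H.Coloring κ :=
  Coloring.mk (fun w => if H.Reachable v w then σ (g w) else g w) fun {a b} hab => by
    by_cases ha : H.Reachable v a
    · simpa [ha, ha.trans hab.reachable] using g.valid hab
    · have hb : ¬ H.Reachable v b := fun hb => ha (hb.trans hab.reachable.symm)
      simpa [ha, hb] using g.valid hab

namespace Coloring

variable {H : SimpleGraph V} {w : V} (g : H.Coloring κ) (σ τ : Equiv.Perm κ)

theorem recolorComponent_apply_of_reachable (h : H.Reachable v w) :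
    g.recolorComponent v σ w = σ (g w) := if_pos h

theorem recolorComponent_apply_of_not_reachable (h : ¬ H.Reachable v w) :
    g.recolorComponent v σ w = g w := if_neg h

theorem recolorComponent_recolorComponent :
    (g.recolorComponent v σ).recolorComponent v τ = g.recolorComponent v (σ.trans τ) := by
  ext w
  by_cases h : H.Reachable v w
  · simp [recolorComponent_apply_of_reachable _ _ h]
  · simp [recolorComponent_apply_of_not_reachable _ _ h]

theorem recolorComponent_refl : g.recolorComponent v (Equiv.refl κ) = g := by
  ext w
  by_cases h : H.Reachable v w
  · simp [recolorComponent_apply_of_reachable _ _ h]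
  · simp [recolorComponent_apply_of_not_reachable _ _ h]

end Coloring

/-- Recolouring the component of `v` by a transposition moves the colour of `v` freely and
keeps the colour of `u`. -/
noncomputable def coloringEqProdEquiv {H : SimpleGraph V} [DecidableEq κ]
    (huv : ¬ H.Reachable u v) : {g : H.Coloring κ // g u = g v} × κ ≃ H.Coloring κ where
  toFun x := x.1.1.recolorComponent v (Equiv.swap (x.1.1 v) x.2)
  invFun g := (⟨g.recolorComponent v (Equiv.swap (g v) (g u)), by
    rw [g.recolorComponent_apply_of_not_reachable _ fun h => huv h.symm,
      g.recolorComponent_apply_of_reachable _ (Reachable.refl v), Equiv.swap_apply_left]⟩, g v)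
  left_inv := by
    rintro ⟨⟨g, hg⟩, a⟩
    have hv := g.recolorComponent_apply_of_reachable (Equiv.swap (g v) a) (Reachable.refl v)
    rw [Equiv.swap_apply_left] at hv
    simp only [hv, g.recolorComponent_apply_of_not_reachable _ fun h => huv h.symm, hg,
      Coloring.recolorComponent_recolorComponent, Equiv.swap_comm a, Equiv.swap_swap,
      Coloring.recolorComponent_refl]
  right_inv g := by
    simp only
    rw [g.recolorComponent_apply_of_reachable _ (Reachable.refl v), Equiv.swap_apply_left,
      Coloring.recolorComponent_recolorComponent, Equiv.swap_comm (g u), Equiv.swap_swap,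
      Coloring.recolorComponent_refl]

theorem natCard_coloring_deleteEdges_of_isBridge (huv : u ≠ v)
    (hb : G.IsBridge s(u, v)) :
    Nat.card ((G.deleteEdges {s(u, v)}).Coloring κ) =
      Nat.card ((G.contractEdge huv).Coloring κ) * Nat.card κ := by
  classical
  rw [← Nat.card_congr (coloringEqProdEquiv (isBridge_iff.1 hb)), Nat.card_prod,
    Nat.card_congr (contractEdgeColoringEquiv huv)]

theorem natCard_coloring_bot (κ : Type*) :
    Nat.card ((⊥ : SimpleGraph V).Coloring κ) = Nat.card (V → κ) :=
  Nat.card_eq_of_bijective (fun g => ⇑g)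
    ⟨DFunLike.coe_injective, fun c => ⟨Coloring.mk c fun h => h.elim, rfl⟩⟩

end Colorings

def IsChromaticPoly (G : SimpleGraph V) (p : ℤ[X]) : Prop :=
  ∀ k : ℕ, p.eval (k : ℤ) = Nat.card (G.Coloring (Fin k))

variable {p q : ℤ[X]}

theorem isChromaticPoly_bot [Finite V] :
    (⊥ : SimpleGraph V).IsChromaticPoly (X ^ Nat.card V) := fun k => by
  simp [natCard_coloring_bot, Nat.card_fun]

theorem IsChromaticPoly.sub_of_deleteEdges [Finite V] (huv : G.Adj u v)
    (hp : (G.deleteEdges {s(u, v)}).IsChromaticPoly p)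
    (hq : (G.contractEdge huv.ne).IsChromaticPoly q) : G.IsChromaticPoly (p - q) := fun k => by
  rw [eval_sub, hp, hq, natCard_coloring_deleteEdges huv]
  push_cast; ring

theorem IsChromaticPoly.eq_X_mul_of_isBridge (huv : u ≠ v) (hb : G.IsBridge s(u, v))
    (hp : (G.deleteEdges {s(u, v)}).IsChromaticPoly p)
    (hq : (G.contractEdge huv).IsChromaticPoly q) : p = X * q :=
  eq_of_eval_natCast_eq fun k => by
    rw [hp, eval_mul, eval_X, hq, natCard_coloring_deleteEdges_of_isBridge huv hb, Nat.card_fin]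
    push_cast; ring

/-- The exponent `|V| + c(G)` has the parity of `|V| - c(G)` and avoids truncated subtraction. -/
theorem exists_isChromaticPoly_sign [Finite V] (G : SimpleGraph V) :
    ∃ p : ℤ[X], G.IsChromaticPoly p ∧ ∀ x ∈ Set.Ioo (0 : ℝ) 1,
      0 < (-1) ^ (Nat.card V + Nat.card G.ConnectedComponent) * aeval x p := by
  induction hn : Nat.card V using Nat.strong_induction_on generalizing V with
  | _ n ihn =>
  induction G using WellFoundedLT.induction with
  | _ G ihG =>
  by_cases hG : G = ⊥
  · subst hG
    refine ⟨X ^ n, hn ▸ isChromaticPoly_bot, fun x hx => ?_⟩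
    rw [natCard_connectedComponent_bot, hn, Even.neg_one_pow ⟨n, rfl⟩, one_mul, map_pow,
      aeval_X]
    exact pow_pos hx.1 n
  obtain ⟨u, v, huv⟩ : ∃ u v, G.Adj u v := by
    by_contra! h; exact hG (by ext; simp [h])
  have hlt : G.deleteEdges {s(u, v)} < G := (deleteEdges_le _).lt_of_ne fun h =>
    Set.disjoint_singleton_right.1 (deleteEdges_eq_self.1 h) huv
  obtain ⟨p, hp, hp_sign⟩ := ihG _ hlt
  have hcard := Nat.card_subtype_ne_add_one v
  obtain ⟨q, hq, hq_sign⟩ := ihn _ (by omega) (G.contractEdge huv.ne) rfl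
  rw [natCard_connectedComponent_contractEdge huv] at hq_sign
  refine ⟨p - q, hp.sub_of_deleteEdges huv hq, fun x hx => ?_⟩
  have hsign : (-1 : ℝ) ^ (n + Nat.card G.ConnectedComponent) =
      -(-1) ^ (Nat.card {w // w ≠ v} + Nat.card G.ConnectedComponent) := by
    rw [← hn, ← hcard, add_right_comm, pow_succ, mul_neg_one]
  rw [hsign]
  by_cases hb : G.IsBridge s(u, v)
  · have := mul_pos (sub_pos.2 hx.2) (hq_sign x hx)
    rw [hp.eq_X_mul_of_isBridge huv.ne hb hq, map_sub, map_mul, aeval_X]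
    linarith
  · have := hp_sign x hx
    rw [natCard_connectedComponent_deleteEdges_of_not_isBridge hb, hsign] at this
    have := hq_sign x hx
    rw [map_sub]
    linarith

end SimpleGraph

open Real goldenRatio

theorem aeval_goldenConj_sq_eq_zero {p : ℤ[X]} (hp : aeval (φ ^ 2) p = 0) :
    aeval (ψ ^ 2) p = 0 := by
  have hmon : (X ^ 2 - 3 * X + 1 : ℤ[X]).Monic := by monicity!
  have hdeg : (X ^ 2 - 3 * X + 1 : ℤ[X]).natDegree = 2 := by compute_degree!
  have hirr : Irrational (φ ^ 2) := by
    rw [goldenRatio_sq]; exact_mod_cast goldenRatio_irrational.add_natCast 1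
  have heval (x : ℝ) : aeval x (X ^ 2 - 3 * X + 1 : ℤ[X]) = x ^ 2 - 3 * x + 1 := by
    simp only [map_add, map_sub, map_mul, map_pow, aeval_X, map_one, map_ofNat]
  -- `X ^ 4 - 3 X ^ 2 + 1 = (X ^ 2 - X - 1) (X ^ 2 + X - 1)`
  obtain ⟨q, rfl⟩ := dvd_of_aeval_eq_zero_of_irrational hmon hdeg hirr
    (by rw [heval]; linear_combination (φ ^ 2 + φ - 1) * goldenRatio_sq) hp
  rw [map_mul, heval, mul_eq_zero]
  left; linear_combination (ψ ^ 2 + ψ - 1) * goldenConj_sq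

theorem goldenRatio_sq_not_chromaticRoot : ¬ IsChromaticRoot (phi ^ 2) := by
  rintro ⟨V, _, G, p, hp, hroot⟩
  obtain ⟨q, hq, hq_sign⟩ := G.exists_isChromaticPoly_sign
  have hpq : p = q.map (Int.castRingHom ℝ) :=
    eq_of_eval_natCast_eq fun k => by rw [hp, eval_natCast_map, hq k]; simp
  have hψ : aeval (ψ ^ 2) q = 0 := by
    refine aeval_goldenConj_sq_eq_zero ?_
    rwa [hpq, eval_map, ← algebraMap_int_eq, ← aeval_def] at hroot
  have hψ_mem : ψ ^ 2 ∈ Set.Ioo (0 : ℝ) 1 := by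
    rw [goldenConj_sq]
    exact ⟨by linarith [neg_one_lt_goldenConj], by linarith [goldenConj_neg]⟩
  have := hq_sign _ hψ_mem
  rw [hψ, mul_zero] at this
  exact lt_irrefl 0 this
end

section
/- For any odd natural number n, -φⁿ cannot be a root of the domination polynomial of any graph, where φ = (1+√5)/2. -/
open SimpleGraph Polynomial

/-- `S` is a dominating set of `G`: every vertex outside `S` has a neighbour in `S`. -/
def IsDominatingSet {V : Type*} (G : SimpleGraph V) (S : Finset V) : Prop :=
  ∀ v ∉ S, ∃ u ∈ S, G.Adj u v

/-- The domination polynomial `D(G,x) = Σₖ d(G,k) xᵏ`, where `d(G,k)` is the number of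
dominating sets of `G` of cardinality `k`. -/
noncomputable def dominationPolynomial {V : Type*} [Fintype V] (G : SimpleGraph V) :
    Polynomial ℝ :=
  ∑ k ∈ Finset.range (Fintype.card V + 1),
    Polynomial.C ((Nat.card {S : Finset V // IsDominatingSet G S ∧ S.card = k} : ℝ)) *
      Polynomial.X ^ k

/-
An integer polynomial vanishing at `φ` is divisible by `X² - X - 1`, since its remainder is linear
and vanishes at the irrational `φ`; hence it also vanishes at the conjugate `ψ = (1 - √5)/2`.
The domination polynomial has integer coefficients, so `D(G, -φⁿ) = 0` would force
`D(G, -ψⁿ) = 0`. For odd `n` the point `-ψⁿ` is positive, but `D(G, x)` has nonnegative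
coefficients and leading term `x^|V|` (the whole vertex set dominates), so it has no positive roots.
-/

open Real goldenRatio

lemma phi_eq_goldenRatio : phi = φ := rfl

lemma Irrational.eq_zero_of_degree_le_one_of_aeval_eq_zero {x : ℝ} (hx : Irrational x)
    {r : ℤ[X]} (hr : r.degree ≤ 1) (h : aeval x r = 0) : r = 0 := by
  rw [eq_X_add_C_of_degree_le_one hr] at h ⊢
  replace h : (r.coeff 1 : ℝ) * x + r.coeff 0 = 0 := by simpa using h
  have hslope : r.coeff 1 = 0 := by
    by_contra hslope
    apply hx.ne_rat (-(r.coeff 0) / r.coeff 1)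
    push_cast
    field_simp
    linarith
  simp_all

lemma aeval_goldenRatio_X_sq_sub_X_sub_one : aeval φ (X ^ 2 - X - 1 : ℤ[X]) = 0 := by
  simp [goldenRatio_sq]

lemma aeval_goldenConj_X_sq_sub_X_sub_one : aeval ψ (X ^ 2 - X - 1 : ℤ[X]) = 0 := by
  simp [goldenConj_sq]

lemma monic_X_sq_sub_X_sub_one : (X ^ 2 - X - 1 : ℤ[X]).Monic := by
  rw [sub_sub]
  exact monic_X_pow_sub (by compute_degree!)

lemma X_sq_sub_X_sub_one_dvd_of_aeval_goldenRatio_eq_zero {p : ℤ[X]} (h : aeval φ p = 0) :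
    X ^ 2 - X - 1 ∣ p := by
  have hm := monic_X_sq_sub_X_sub_one
  rw [← modByMonic_eq_zero_iff_dvd hm]
  refine goldenRatio_irrational.eq_zero_of_degree_le_one_of_aeval_eq_zero ?_ ?_
  · have := degree_modByMonic_lt p hm
    rw [show (X ^ 2 - X - 1 : ℤ[X]).degree = 2 by compute_degree!] at this
    exact Order.le_of_lt_succ this
  · rwa [aeval_modByMonic_eq_self_of_root aeval_goldenRatio_X_sq_sub_X_sub_one]

lemma aeval_goldenConj_eq_zero_of_aeval_goldenRatio_eq_zero {p : ℤ[X]} (h : aeval φ p = 0) :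
    aeval ψ p = 0 := by
  obtain ⟨q, rfl⟩ := X_sq_sub_X_sub_one_dvd_of_aeval_goldenRatio_eq_zero h
  rw [map_mul, aeval_goldenConj_X_sq_sub_X_sub_one, zero_mul]

lemma eval_neg_goldenConj_pow_eq_zero {p : ℝ[X]} (hp : p ∈ lifts (algebraMap ℤ ℝ)) (n : ℕ)
    (h : p.eval (-(φ ^ n)) = 0) : p.eval (-(ψ ^ n)) = 0 := by
  obtain ⟨q, rfl⟩ := (mem_lifts p).mp hp
  have eval_eq (x : ℝ) :
      (q.map (algebraMap ℤ ℝ)).eval (-(x ^ n)) = aeval x (q.comp (-X ^ n)) := by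
    rw [eval_map_algebraMap, aeval_comp]
    simp
  rw [eval_eq] at h ⊢
  exact aeval_goldenConj_eq_zero_of_aeval_goldenRatio_eq_zero h

lemma isDominatingSet_univ {V : Type*} [Fintype V] (G : SimpleGraph V) :
    IsDominatingSet G Finset.univ :=
  fun v hv => absurd (Finset.mem_univ v) hv

lemma dominationPolynomial_mem_lifts {V : Type*} [Fintype V] (G : SimpleGraph V) :
    dominationPolynomial G ∈ lifts (algebraMap ℤ ℝ) := by
  refine Subsemiring.sum_mem _ fun k _ => mul_mem ?_ (X_pow_mem_lifts _ k)
  exact_mod_cast C_mem_lifts (algebraMap ℤ ℝ) _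

lemma dominationPolynomial_eval_pos {V : Type*} [Fintype V] (G : SimpleGraph V) {t : ℝ}
    (ht : 0 < t) : 0 < (dominationPolynomial G).eval t := by
  rw [dominationPolynomial, eval_finsetSum]
  simp only [eval_mul, eval_C, eval_pow, eval_X]
  refine Finset.sum_pos' (fun k _ => by positivity) ⟨Fintype.card V, by simp, ?_⟩
  have : Nonempty {S : Finset V // IsDominatingSet G S ∧ S.card = Fintype.card V} :=
    ⟨⟨Finset.univ, isDominatingSet_univ G, Finset.card_univ⟩⟩
  have := Nat.card_pos (α := {S : Finset V // IsDominatingSet G S ∧ S.card = Fintype.card V})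
  positivity

theorem neg_goldenRatio_pow_odd_not_dominationRoot (n : ℕ) (hn : Odd n)
    {V : Type*} [Fintype V] (G : SimpleGraph V) :
    (dominationPolynomial G).eval (-(phi ^ n)) ≠ 0 := by
  rw [phi_eq_goldenRatio]
  intro h
  have hψ := eval_neg_goldenConj_pow_eq_zero (dominationPolynomial_mem_lifts G) n h
  have hpos : 0 < -(ψ ^ n) := neg_pos.mpr (hn.pow_neg goldenConj_neg)
  exact (dominationPolynomial_eval_pos G hpos).ne' hψ
end

section
/- For every graph H, the graph G = H ∘ K̄₂ (the corona of H with the empty graph on 2 vertices) has domination polynomial D(G,x) = x^{n/3}(x² + 3x + 1)^{n/3}, where n = |V(G)|; in particular, -φ² = -(3+√5)/2 is a domination root of G. -/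
open SimpleGraph Polynomial

/-- The corona `H ∘ K̄₂`: one copy of `H`, and for each vertex of `H` two new
pendant vertices joined to it (the copies of the empty graph on two vertices). -/
def coronaKbar2 {V : Type*} (H : SimpleGraph V) : SimpleGraph (V ⊕ V × Fin 2) where
  Adj x y :=
    match x, y with
    | .inl a, .inl b => H.Adj a b
    | .inl a, .inr (b, _) => a = b
    | .inr (a, _), .inl b => a = b
    | .inr _, .inr _ => False
  symm := ⟨by rintro (a | ⟨a, i⟩) (b | ⟨b, j⟩) h <;> simp_all [SimpleGraph.adj_comm, eq_comm]⟩
  loopless := ⟨by rintro (a | ⟨a, i⟩) h <;> simp_all⟩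

open Finset

/-! A set dominates `H ∘ K̄₂` iff at every vertex `v` of `H` it contains `v` or both pendants
of `v`, a condition local to the block `{v, v₁, v₂}`. Dominating sets are therefore exactly the
unions of admissible choices on the blocks, so `D(H ∘ K̄₂, x)` is the `|V(H)|`-th power of the
block polynomial `x (1 + x)² + x² = x (x² + 3x + 1)`. Finally `φ² = φ + 1` gives
`φ⁴ - 3φ² + 1 = (φ² - φ - 1)(φ² + φ - 1) = 0`. -/

theorem Finset.sum_filter_powerset_insert_pow_card {α R : Type*} [DecidableEq α] [CommSemiring R]
    {a : α} {B : Finset α} (ha : a ∉ B) (x : R) :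
    ∑ T ∈ (insert a B).powerset with a ∈ T ∨ B ⊆ T, x ^ #T =
      x * (x + 1) ^ #B + x ^ #B := by
  rw [sum_filter, sum_powerset_insert ha, add_comm]
  congr 1
  · have hcard : ∀ T ∈ B.powerset, #(insert a T) = #T + 1 := fun T hT =>
      card_insert_of_notMem fun h => ha (mem_powerset.1 hT h)
    rw [← sum_pow_mul_eq_add_pow, mul_sum]
    refine sum_congr rfl fun T hT => ?_
    rw [if_pos (.inl (mem_insert_self a T)), hcard T hT, one_pow, mul_one, pow_succ']
  · have hB : ∀ T ∈ B.powerset, (a ∈ T ∨ B ⊆ T ↔ B = T) := fun T hT => by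
      have hTB := mem_powerset.1 hT
      exact ⟨fun h => h.elim (fun h => absurd (hTB h) ha) hTB.antisymm', fun h => .inr h.le⟩
    rw [sum_congr rfl fun T hT => if_congr (hB T hT) rfl rfl, sum_ite_eq,
      if_pos (mem_powerset_self B)]

theorem Finset.sum_filter_fiberwise_pow_card {W V R : Type*} [Fintype W] [Fintype V]
    [DecidableEq W] [DecidableEq V] [CommSemiring R] (π : W → V) (Q : V → Finset W → Prop)
    [∀ v, DecidablePred (Q v)] (x : R) :
    ∑ S : Finset W with ∀ v, Q v {w ∈ S | π w = v}, x ^ #S =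
      ∏ v, ∑ T ∈ ({w | π w = v} : Finset W).powerset with Q v T, x ^ #T := by
  have fiber_glue : ∀ p : V → Finset W, (∀ v, p v ⊆ ({w | π w = v} : Finset W)) →
      ∀ v, {w ∈ ({w | w ∈ p (π w)} : Finset W) | π w = v} = p v := by
    intro p hp v
    ext w
    simp only [mem_filter, mem_univ, true_and]
    refine ⟨fun ⟨hw, hπ⟩ => hπ ▸ hw, fun hw => ?_⟩
    obtain rfl : π w = v := by simpa using hp v hw
    exact ⟨hw, rfl⟩
  rw [prod_univ_sum]
  refine sum_nbij' (fun S v => {w ∈ S | π w = v}) (fun p => ({w | w ∈ p (π w)} : Finset W))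
    ?_ ?_ ?_ ?_ ?_
  · intro S hS
    simp only [mem_filter, mem_univ, true_and] at hS
    simp only [Fintype.mem_piFinset, mem_filter, mem_powerset]
    exact fun v => ⟨fun w hw => by simp_all, hS v⟩
  · intro p hp
    simp only [Fintype.mem_piFinset, mem_filter, mem_powerset] at hp
    simp only [mem_filter, mem_univ, true_and, fiber_glue p fun v => (hp v).1]
    exact fun v => (hp v).2
  · intro S _; ext w; simp
  · intro p hp
    simp only [Fintype.mem_piFinset, mem_filter, mem_powerset] at hp
    exact funext (fiber_glue p fun v => (hp v).1)
  · intro S _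
    rw [prod_pow_eq_pow_sum,
      card_eq_sum_card_fiberwise (f := π) (t := univ) fun _ _ => mem_univ _]

theorem dominationPolynomial_eq_sum {W : Type*} [Fintype W] (G : SimpleGraph W)
    [DecidablePred (IsDominatingSet G)] :
    dominationPolynomial G = ∑ S : Finset W with IsDominatingSet G S, (X : ℝ[X]) ^ #S := by
  rw [dominationPolynomial, ← sum_fiberwise_of_maps_to (g := card)
    (t := range (Fintype.card W + 1)) fun S _ => mem_range.2 (Nat.lt_succ_of_le (card_le_univ S))]
  refine sum_congr rfl fun k _ => ?_
  rw [sum_congr rfl fun S hS => by rw [(mem_filter.1 hS).2], sum_const, nsmul_eq_mul,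
    filter_filter, Nat.card_eq_fintype_card, Fintype.card_subtype]
  simp

section Corona

variable {V : Type*} (H : SimpleGraph V)

theorem isDominatingSet_coronaKbar2_iff (S : Finset (V ⊕ V × Fin 2)) :
    IsDominatingSet (coronaKbar2 H) S ↔
      ∀ v, .inl v ∈ S ∨ (.inr (v, 0) ∈ S ∧ .inr (v, 1) ∈ S) := by
  constructor
  · intro h v
    refine or_iff_not_imp_left.2 fun hv => ?_
    have pendant_mem : ∀ i : Fin 2, .inr (v, i) ∈ S := fun i => by
      by_contra hi
      obtain ⟨u | ⟨w, k⟩, hu, hadj⟩ := h _ hi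
      · obtain rfl : u = v := hadj
        exact hv hu
      · exact hadj
    exact ⟨pendant_mem 0, pendant_mem 1⟩
  · rintro h (v | ⟨v, i⟩) hx
    · obtain hv | ⟨h0, -⟩ := h v
      · exact absurd hv hx
      · exact ⟨.inr (v, 0), h0, rfl⟩
    · obtain hv | ⟨h0, h1⟩ := h v
      · exact ⟨.inl v, hv, rfl⟩
      · fin_cases i <;> contradiction

theorem coronaKbar2_fiber [Fintype V] [DecidableEq V] (v : V) :
    ({w | Sum.elim id Prod.fst w = v} : Finset (V ⊕ V × Fin 2)) =
      insert (.inl v) {.inr (v, 0), .inr (v, 1)} := by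
  ext (w | ⟨w, i⟩)
  · simp [eq_comm]
  · fin_cases i <;> simp [eq_comm]

theorem dominationPolynomial_coronaKbar2_eq [Fintype V] :
    dominationPolynomial (coronaKbar2 H) = (X * (X ^ 2 + 3 * X + 1)) ^ Fintype.card V := by
  classical
  set π : V ⊕ V × Fin 2 → V := Sum.elim id Prod.fst
  set Q : V → Finset (V ⊕ V × Fin 2) → Prop :=
    fun v T => .inl v ∈ T ∨ {.inr (v, 0), .inr (v, 1)} ⊆ T
  have hdom : ∀ S, IsDominatingSet (coronaKbar2 H) S ↔ ∀ v, Q v {w ∈ S | π w = v} := by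
    simp [isDominatingSet_coronaKbar2_iff, Q, π, insert_subset_iff]
  have hlocal : ∀ v,
      ∑ T ∈ ({w | π w = v} : Finset _).powerset with Q v T, (X : ℝ[X]) ^ #T =
        X * (X ^ 2 + 3 * X + 1) := by
    intro v
    rw [show ({w | π w = v} : Finset _) = _ from coronaKbar2_fiber v,
      sum_filter_powerset_insert_pow_card (by simp), card_pair (by simp)]
    ring
  calc dominationPolynomial (coronaKbar2 H)
      = ∑ S : Finset _ with ∀ v, Q v {w ∈ S | π w = v}, (X : ℝ[X]) ^ #S := by
        simp only [dominationPolynomial_eq_sum, hdom]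
    _ = (X * (X ^ 2 + 3 * X + 1)) ^ Fintype.card V :=
        (sum_filter_fiberwise_pow_card π Q X).trans (by simp only [hlocal, prod_const, card_univ])

end Corona

theorem isRoot_neg_phi_sq : (X ^ 2 + 3 * X + 1 : ℝ[X]).IsRoot (-(phi ^ 2)) := by
  have h : phi ^ 2 = phi + 1 := Real.goldenRatio_sq
  simp only [IsRoot, eval_add, eval_mul, eval_pow, eval_X, eval_one, eval_ofNat]
  linear_combination (phi ^ 2 + phi - 1) * h

theorem dominationPolynomial_coronaKbar2 {V : Type*} [Fintype V] (H : SimpleGraph V)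
    (n : ℕ) (hn : n = Fintype.card (V ⊕ V × Fin 2)) :
    dominationPolynomial (coronaKbar2 H) =
      Polynomial.X ^ (n / 3) * (Polynomial.X ^ 2 + 3 * Polynomial.X + 1) ^ (n / 3) ∧
      (Nonempty V → (dominationPolynomial (coronaKbar2 H)).eval (-(phi ^ 2)) = 0) := by
  have hn3 : n / 3 = Fintype.card V := by
    rw [hn, Fintype.card_sum, Fintype.card_prod, Fintype.card_fin]
    omega
  have hD : dominationPolynomial (coronaKbar2 H) =
      X ^ (n / 3) * (X ^ 2 + 3 * X + 1) ^ (n / 3) := by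
    rw [dominationPolynomial_coronaKbar2_eq, hn3, mul_pow]
  refine ⟨hD, fun _ => ?_⟩
  rw [hD, eval_mul, eval_pow, eval_pow, isRoot_neg_phi_sq.eq_zero,
    zero_pow (hn3 ▸ Fintype.card_ne_zero), mul_zero]
end
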